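/- Let F ∈ B_c(T) be real-valued and let n be a nonzero integer. Then the Fourier coefficient of f = F′ satisfies |f̂(n)| ≤ 4√2·|n|·‖f‖_T; explicitly, |(−1)^n F(π) + i n ∫_{−π}^{π} F(t) e^{−int} dt| ≤ 4√2·|n|·sup{ |F(β) − F(α)| : α ≤ β ≤ α + 2π }. -/

import Mathlib

/-!
Since `e^{-int}` has mean zero over a period when `n ≠ 0`, subtracting a constant `c` from `F`
does not change `∫ F(t) e^{-int} dt`. As `F` is real-valued, `c` can be chosen as the midpoint of
the range of `F` on `[-π, π]`, so that `|F - c| ≤ ‖f‖_T / 2` there and the integral term is at most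
`π |n| ‖f‖_T`. Together with `|F(π)| = |F(π) - F(-π)| ≤ ‖f‖_T` and `1 + π ≤ 4√2` this gives the
bound. The supremum defining `‖f‖_T` is finite because `F(x) - F(π) x / 2π` is continuous and
`2π`-periodic, hence bounded.
-/

open MeasureTheory Real

theorem bddAbove_abs_sub_of_add_period_eq {F : ℝ → ℝ} {T c : ℝ} (hF : Continuous F)
    (hT : T ≠ 0) (hper : ∀ x, F (x + T) = F x + c) (L : ℝ) :
    BddAbove {r : ℝ | ∃ α β : ℝ, α ≤ β ∧ β ≤ α + L ∧ r = |F β - F α|} := by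
  set G : ℝ → ℝ := fun x => F x - c / T * x
  have hG : Function.Periodic G T := fun x => by
    simp only [G, hper]
    field_simp
    ring
  obtain ⟨B, hB⟩ := isBounded_iff_forall_norm_le.1
    (hG.isBounded_of_continuous hT (by fun_prop))
  have hGB : ∀ x, |G x| ≤ B := fun x => hB _ ⟨x, rfl⟩
  refine ⟨2 * B + |c / T| * L, ?_⟩
  rintro r ⟨α, β, hαβ, hβα, rfl⟩
  have hsplit : F β - F α = (G β - G α) + c / T * (β - α) := by simp only [G]; ring
  calc |F β - F α| ≤ |G β| + |G α| + |c / T| * |β - α| := by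
        rw [hsplit, ← abs_mul]
        exact (abs_add_le _ _).trans (by gcongr; exact abs_sub _ _)
    _ ≤ 2 * B + |c / T| * L := by
        rw [abs_of_nonneg (sub_nonneg.2 hαβ)]
        nlinarith [hGB α, hGB β, abs_nonneg (c / T)]

theorem exists_forall_abs_sub_le_half {s : Set ℝ} {F : ℝ → ℝ} {M : ℝ} (hs : IsCompact s)
    (hne : s.Nonempty) (hF : ContinuousOn F s) (hM : ∀ x ∈ s, ∀ y ∈ s, |F y - F x| ≤ M) :
    ∃ c, ∀ t ∈ s, |F t - c| ≤ M / 2 := by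
  obtain ⟨tmax, htmax, hmax⟩ := hs.exists_isMaxOn hne hF
  obtain ⟨tmin, htmin, hmin⟩ := hs.exists_isMinOn hne hF
  have hosc : F tmax - F tmin ≤ M := (le_abs_self _).trans (hM tmin htmin tmax htmax)
  refine ⟨(F tmax + F tmin) / 2, fun t ht => abs_le.2 ⟨?_, ?_⟩⟩
  · linarith [show F tmin ≤ F t from hmin ht]
  · linarith [show F t ≤ F tmax from hmax ht]

theorem integral_exp_neg_I_int_mul_eq_zero {n : ℤ} (hn : n ≠ 0) (a : ℝ) :
    ∫ t in a..a + 2 * π, Complex.exp (-Complex.I * n * t) = 0 := by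
  have hc : -Complex.I * n ≠ 0 := by simp [hn]
  have hperiod :
      Complex.exp (-Complex.I * n * ↑(a + 2 * π)) = Complex.exp (-Complex.I * n * a) := by
    rw [show -Complex.I * n * ↑(a + 2 * π) = -Complex.I * n * a + ↑(-n) * (2 * π * Complex.I) by
      push_cast; ring, Complex.exp_add, Complex.exp_int_mul_two_pi_mul_I, mul_one]
  rw [integral_exp_mul_complex hc, hperiod, sub_self, zero_div]

theorem norm_integral_mul_exp_le {G : ℝ → ℂ} {n : ℤ} (hn : n ≠ 0) {a : ℝ}
    (hG : IntervalIntegrable G volume a (a + 2 * π)) {c : ℂ} {C : ℝ}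
    (hC : ∀ t ∈ Set.Icc a (a + 2 * π), ‖G t - c‖ ≤ C) :
    ‖∫ t in a..a + 2 * π, G t * Complex.exp (-Complex.I * n * t)‖ ≤ 2 * π * C := by
  have hexp : Continuous fun t : ℝ => Complex.exp (-Complex.I * n * t) := by fun_prop
  have hshift : ∫ t in a..a + 2 * π, G t * Complex.exp (-Complex.I * n * t)
      = ∫ t in a..a + 2 * π, (G t - c) * Complex.exp (-Complex.I * n * t) := by
    simp only [sub_mul]
    rw [intervalIntegral.integral_sub (hG.mul_continuousOn hexp.continuousOn)
      ((hexp.intervalIntegrable _ _).const_mul c), intervalIntegral.integral_const_mul,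
      integral_exp_neg_I_int_mul_eq_zero hn, mul_zero, sub_zero]
  have hab : a ≤ a + 2 * π := by linarith [pi_pos]
  rw [hshift]
  calc _ ≤ C * |a + 2 * π - a| := by
        refine intervalIntegral.norm_integral_le_of_norm_le_const fun t ht => ?_
        rw [Set.uIoc_of_le hab] at ht
        rw [norm_mul, Complex.norm_exp]
        simpa [Complex.mul_re] using hC t (Set.Ioc_subset_Icc_self ht)
    _ = 2 * π * C := by rw [add_sub_cancel_left, abs_of_pos two_pi_pos, mul_comm]

theorem one_add_pi_le_four_mul_sqrt_two : 1 + π ≤ 4 * √2 := by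
  nlinarith [sq_sqrt (show (0 : ℝ) ≤ 2 by norm_num), sqrt_nonneg 2, pi_lt_d2]

theorem fourier_coeff_le_alexiewicz (F : ℝ → ℝ)
    (hFcont : Continuous F) (hF0 : F (-π) = 0)
    (hFper : ∀ x : ℝ, F (x + 2 * π) = F x + F π)
    (n : ℤ) (hn : n ≠ 0) :
    ‖(-1 : ℂ) ^ n * (F π : ℂ)
        + Complex.I * (n : ℂ) *
          ∫ t in (-π)..π, (F t : ℂ) * Complex.exp (-Complex.I * (n : ℂ) * (t : ℂ))‖
      ≤ 4 * Real.sqrt 2 * |(n : ℝ)| *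
        sSup {r : ℝ | ∃ α β : ℝ, α ≤ β ∧ β ≤ α + 2 * π ∧ r = |F β - F α|} := by
  set M := sSup {r : ℝ | ∃ α β : ℝ, α ≤ β ∧ β ≤ α + 2 * π ∧ r = |F β - F α|}
  have hpi : -π + 2 * π = π := by ring
  have hle : ∀ α β, α ≤ β → β ≤ α + 2 * π → |F β - F α| ≤ M := fun α β h₁ h₂ =>
    le_csSup (bddAbove_abs_sub_of_add_period_eq hFcont two_pi_pos.ne' hFper _) ⟨α, β, h₁, h₂, rfl⟩
  have hM : 0 ≤ M := by simpa using hle 0 0 le_rfl (by positivity)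
  have hFπ : |F π| ≤ M := by simpa [hF0] using hle (-π) π (by linarith [pi_pos]) hpi.ge
  obtain ⟨c, hc⟩ : ∃ c, ∀ t ∈ Set.Icc (-π) π, |F t - c| ≤ M / 2 := by
    refine exists_forall_abs_sub_le_half isCompact_Icc (by simp [pi_nonneg])
      hFcont.continuousOn fun x hx y hy => ?_
    rcases le_total x y with hxy | hyx
    · exact hle x y hxy (by linarith [hx.1, hy.2])
    · rw [abs_sub_comm]; exact hle y x hyx (by linarith [hx.2, hy.1])
  have hint : ‖∫ t in (-π)..π, (F t : ℂ) * Complex.exp (-Complex.I * n * t)‖ ≤ π * M := by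
    have hFc : Continuous fun t => (F t : ℂ) := by fun_prop
    have := norm_integral_mul_exp_le hn (hFc.intervalIntegrable (-π) _) (c := c) (C := M / 2)
      fun t ht => by
        rw [← Complex.ofReal_sub, Complex.norm_real, norm_eq_abs]
        exact hc t (by rwa [hpi] at ht)
    rwa [hpi, show 2 * π * (M / 2) = π * M by ring] at this
  have hn1 : 1 ≤ |(n : ℝ)| := by exact_mod_cast Int.one_le_abs hn
  calc _ ≤ |F π| + |(n : ℝ)| * (π * M) := by
        refine (norm_add_le _ _).trans (add_le_add ?_ ?_)
        · simp
        · rw [norm_mul, norm_mul, Complex.norm_I, one_mul, Complex.norm_intCast]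
          exact mul_le_mul_of_nonneg_left hint (abs_nonneg _)
    _ ≤ (1 + π) * |(n : ℝ)| * M := by nlinarith [mul_nonneg (abs_nonneg (n : ℝ)) hM]
    _ ≤ 4 * √2 * |(n : ℝ)| * M := by gcongr; exact one_add_pi_le_four_mul_sqrt_two
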